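/- arXiv:1809.00718 — 4 statements merged into one kernel-verified Lean document; each statement's English description precedes it below -/
import Mathlib

section
/- Let G be a finite abelian group. Then every torsion unit of the integral group ring ℤG is trivial; more precisely, if u is a unit of finite order in ℤG with augmentation 1 (a normalized torsion unit), then u is equal to the image of some element g of G in ℤG. -/
open MonoidAlgebra

/-- The augmentation map of a group ring: the sum of the coefficients. -/
noncomputable def aug (R : Type*) [CommRing R] (G : Type*) [Group G] :
    MonoidAlgebra R G →+* R :=
  MonoidAlgebra.liftNCRingHom (RingHom.id R) 1 (fun _ _ => Commute.one_right _)

/-- The coefficient-wise ring homomorphism between group rings induced by a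
ring homomorphism of the coefficient rings. -/
noncomputable def mapCoeff {R S : Type*} [CommRing R] [CommRing S] (G : Type*) [Group G]
    (f : R →+* S) : MonoidAlgebra R G →+* MonoidAlgebra S G :=
  MonoidAlgebra.liftNCRingHom (MonoidAlgebra.singleOneRingHom.comp f) (MonoidAlgebra.of S G)
    (fun r g => by
      simp [Commute, SemiconjBy, MonoidAlgebra.singleOneRingHom,
        MonoidAlgebra.single_mul_single])

open scoped Classical in
/-- The partial augmentation at `g`: the sum of the coefficients at the
conjugacy class of `g`. -/
noncomputable def partialAug {G : Type*} [Group G] [Fintype G] (g : G)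
    (a : MonoidAlgebra ℤ G) : ℤ :=
  ∑ x ∈ Finset.univ.filter (fun x => IsConj g x), a.coeff x

/-!
Every character `ψ` of `G` extends to a ring homomorphism `ℤG → ℂ`, which sends a torsion unit
`u = ∑ u_g g` to a root of unity. Parseval's identity `∑_ψ |ψ(u)|² = |G| ∑_g u_g²` then forces
`∑_g u_g² = 1`, so `u = ±g` for some `g ∈ G`, and augmentation `1` fixes the sign.
-/

open Finset ComplexConjugate

theorem AddChar.sum_norm_sum_mul_apply_sq {α : Type*} [AddCommGroup α] [Fintype α]
    (c : α → ℂ) :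
    ∑ ψ : AddChar α ℂ, ‖∑ a, c a * ψ a‖ ^ 2 = Fintype.card α * ∑ a, ‖c a‖ ^ 2 := by
  classical
  have expand (ψ : AddChar α ℂ) (a b : α) :
      c a * ψ a * (conj (c b) * ψ (-b)) = c a * conj (c b) * ψ (a - b) := by
    rw [sub_eq_add_neg, AddChar.map_add_eq_mul]; ring
  apply Complex.ofReal_injective
  push_cast
  simp_rw [← Complex.mul_conj', map_sum, map_mul, ← AddChar.map_neg_eq_conj, sum_mul_sum, expand]
  rw [sum_comm]
  simp_rw [sum_comm (γ := AddChar α ℂ), ← mul_sum, AddChar.sum_apply_eq_ite, sub_eq_zero, mul_ite,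
    mul_zero, sum_ite_eq, mem_univ, if_true]
  rw [← sum_mul, mul_comm]

theorem MonoidAlgebra.lift_apply_eq_sum {R A M : Type*} [CommSemiring R] [Semiring A]
    [Algebra R A] [Monoid M] [Fintype M] (F : M →* A) (a : MonoidAlgebra R M) :
    lift R A M F a = ∑ m, a.coeff m • F m := by
  rw [lift_apply, Finsupp.sum_fintype _ _ (by simp)]

theorem aug_apply {R G : Type*} [CommRing R] [Group G] [Fintype G] (a : MonoidAlgebra R G) :
    aug R G a = ∑ g, a.coeff g := by
  change lift R R G 1 a = _
  simp [lift_apply_eq_sum]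

theorem MonoidAlgebra.sum_coeff_sq_eq_one_of_isOfFinOrder {G : Type*} [CommGroup G] [Fintype G]
    {u : (MonoidAlgebra ℤ G)ˣ} (hu : IsOfFinOrder u) :
    ∑ g, (u : MonoidAlgebra ℤ G).coeff g ^ 2 = 1 := by
  set c : Additive G → ℂ := fun a => (u : MonoidAlgebra ℤ G).coeff a.toMul
  have hchar (ψ : AddChar (Additive G) ℂ) : ‖∑ a, c a * ψ a‖ = 1 := by
    set χ : G →* ℂ := ψ.toMonoidHom.comp (MulEquiv.multiplicativeAdditive G).symm.toMonoidHom
    have h : lift ℤ ℂ G χ u = ∑ a, c a * ψ a := by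
      rw [lift_apply_eq_sum, ← Additive.ofMul.sum_comp]
      simp [χ, c]
    rw [← h]
    exact ((lift ℤ ℂ G χ : _ →* ℂ).isOfFinOrder (Units.isOfFinOrder_val.mpr hu)).norm_eq_one
  have parseval := AddChar.sum_norm_sum_mul_apply_sq c
  simp only [hchar, one_pow, sum_const, card_univ, AddChar.card_eq, nsmul_eq_mul, mul_one]
    at parseval
  have hcard : (Fintype.card (Additive G) : ℝ) ≠ 0 := Nat.cast_ne_zero.mpr Fintype.card_ne_zero
  have hsum : ∑ a, ‖c a‖ ^ 2 = 1 := (mul_eq_left₀ hcard).mp parseval.symm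
  rw [← Additive.ofMul.sum_comp] at hsum
  simp only [c, Complex.norm_intCast, sq_abs, toMul_ofMul] at hsum
  exact_mod_cast hsum

theorem Int.exists_eq_piSingle_one_of_sum_sq_eq_one_of_sum_eq_one {ι : Type*} [Fintype ι]
    [DecidableEq ι] {c : ι → ℤ} (hsq : ∑ i, c i ^ 2 = 1) (hsum : ∑ i, c i = 1) :
    ∃ i, c = Pi.single i 1 := by
  have hbool : ∀ i, c i = 0 ∨ c i = 1 := by
    have hsum' : ∑ i, c i * (c i - 1) = 0 := by
      simp only [mul_sub_one, sum_sub_distrib, ← sq, hsq, hsum, sub_self]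
    have hterm := (sum_eq_zero_iff_of_nonneg fun i _ => ?_).mp hsum'
    · intro i
      simpa [sub_eq_zero] using hterm i (mem_univ i)
    · nlinarith [Int.le_self_sq (c i)]
  obtain ⟨i, -, hi⟩ := exists_ne_zero_of_sum_ne_zero (hsum.trans_ne one_ne_zero)
  have hci : c i = 1 := (hbool i).resolve_left hi
  have hrest : ∑ j ∈ univ.erase i, c j = 0 := by
    rw [← add_sum_erase _ _ (mem_univ i), hci] at hsum
    linarith
  refine ⟨i, funext fun j => ?_⟩
  rcases eq_or_ne j i with rfl | hj
  · simpa using hci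
  · rw [Pi.single_eq_of_ne hj]
    exact (sum_eq_zero_iff_of_nonneg fun k _ => by rcases hbool k with h | h <;> simp [h]).mp
      hrest j (mem_erase.mpr ⟨hj, mem_univ j⟩)

theorem higman_torsion_units_trivial (G : Type*) [CommGroup G] [Fintype G]
    (u : (MonoidAlgebra ℤ G)ˣ) (hu : IsOfFinOrder u)
    (hnorm : aug ℤ G (↑u : MonoidAlgebra ℤ G) = 1) :
    ∃ g : G, (↑u : MonoidAlgebra ℤ G) = MonoidAlgebra.of ℤ G g := by
  classical
  obtain ⟨g, hg⟩ := Int.exists_eq_piSingle_one_of_sum_sq_eq_one_of_sum_eq_one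
    (sum_coeff_sq_eq_one_of_isOfFinOrder hu) (by rwa [aug_apply] at hnorm)
  refine ⟨g, MonoidAlgebra.ext (Finsupp.ext fun x => ?_)⟩
  simpa [Pi.single_apply, Finsupp.single_apply, eq_comm] using congrFun hg x
end

section
/- (Berman–Higman) Let G be a finite group and let u be a torsion element of V(ℤG) with u ≠ 1. Then the coefficient of u at the identity element of G is 0. -/
/-!
Let `ρ` be the left regular representation of `ℂG`. For `u` of finite order the eigenvalues of
`ρ u` are roots of unity, while `tr (ρ u) = |G| · u₁`; hence `|u₁| ≤ 1`, i.e. `u₁ ∈ {0, ±1}`.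
If `u₁ = ±1`, then `tr (ρ (±u)) = |G|` is the dimension, which forces every eigenvalue of
`ρ (±u)` to be `1`. A matrix of finite order is diagonalizable, so `ρ (±u) = 1` and `±u = 1`;
the augmentation rules out `u = -1`, leaving `u = 1`.
-/

open MonoidAlgebra

open Polynomial

lemma IsOfFinOrder.neg {M : Type*} [Monoid M] [HasDistribNeg M] {x : M} (hx : IsOfFinOrder x) :
    IsOfFinOrder (-x) := by
  rw [← neg_one_mul]
  exact (Commute.neg_one_left x).isOfFinOrder_mul
    (isOfFinOrder_iff_pow_eq_one.mpr ⟨2, two_pos, neg_one_sq⟩) hx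

lemma spectrum.isOfFinOrder_of_mem {𝕜 A : Type*} [Field 𝕜] [Ring A] [Algebra 𝕜 A] {a : A}
    (ha : IsOfFinOrder a) {ζ : 𝕜} (hζ : ζ ∈ spectrum 𝕜 a) : IsOfFinOrder ζ := by
  have : Nontrivial A := by
    by_contra h
    rw [not_nontrivial_iff_subsingleton] at h
    simp [spectrum.of_subsingleton] at hζ
  obtain ⟨k, hk, hak⟩ := isOfFinOrder_iff_pow_eq_one.mp ha
  have hζk := spectrum.pow_mem_pow a k hζ
  rw [hak, spectrum.one_eq, Set.mem_singleton_iff] at hζk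
  exact isOfFinOrder_iff_pow_eq_one.mpr ⟨k, hk, hζk⟩

lemma Algebra.isOfFinOrder_leftMulMatrix {R S ι : Type*} [CommSemiring R] [Semiring S]
    [Algebra R S] [Fintype ι] [DecidableEq ι] (b : Module.Basis ι R S) {x : S}
    (hx : IsOfFinOrder x) : IsOfFinOrder (leftMulMatrix b x) :=
  (leftMulMatrix b : S →* Matrix ι ι R).isOfFinOrder hx

lemma norm_multiset_sum_le_card {E : Type*} [SeminormedAddCommGroup E] {s : Multiset E}
    (hs : ∀ x ∈ s, ‖x‖ ≤ 1) : ‖s.sum‖ ≤ Multiset.card s := by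
  simpa using (norm_multiset_sum_le s).trans
    (Multiset.sum_le_card_nsmul _ 1 (by simpa using hs))

lemma Complex.eq_one_of_one_le_re_of_norm_le_one {z : ℂ} (hre : 1 ≤ z.re) (hz : ‖z‖ ≤ 1) :
    z = 1 := by
  have hsq := Complex.sq_norm z
  rw [Complex.normSq_apply] at hsq
  exact Complex.ext (by rw [Complex.one_re]; linarith [Complex.re_le_norm z])
    (by rw [Complex.one_im]; nlinarith [sq_nonneg z.im, norm_nonneg z])

lemma Complex.eq_one_of_multiset_sum_eq_card {s : Multiset ℂ} (hs : ∀ z ∈ s, ‖z‖ ≤ 1)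
    (hsum : s.sum = Multiset.card s) {z : ℂ} (hz : z ∈ s) : z = 1 := by
  obtain ⟨t, rfl⟩ := Multiset.exists_cons_of_mem hz
  have ht : ‖t.sum‖ ≤ Multiset.card t :=
    norm_multiset_sum_le_card fun x hx => hs x (Multiset.mem_cons_of_mem hx)
  have hre : z.re + t.sum.re = Multiset.card t + 1 := by
    simpa using congrArg Complex.re hsum
  exact Complex.eq_one_of_one_le_re_of_norm_le_one (by linarith [Complex.re_le_norm t.sum])
    (hs z hz)

namespace Matrix

variable {n : Type*} [Fintype n] [DecidableEq n]

section IsAlgClosed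

variable {K : Type*} [Field K] [IsAlgClosed K] {M : Matrix n n K}

lemma card_roots_charpoly : Multiset.card M.charpoly.roots = Fintype.card n := by
  rw [IsAlgClosed.card_roots_eq_natDegree, charpoly_natDegree_eq_dim]

/-- The minimal polynomial divides `X ^ k - 1`, so it has no repeated roots; as all of them
are `1`, it divides `X - 1`. -/
lemma eq_one_of_isOfFinOrder_of_roots_charpoly [CharZero K] (hM : IsOfFinOrder M)
    (hroots : ∀ ζ ∈ M.charpoly.roots, ζ = 1) : M = 1 := by
  obtain ⟨k, hk, hMk⟩ := isOfFinOrder_iff_pow_eq_one.mp hM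
  have hsep : (minpoly K M).Separable := by
    refine (separable_X_pow_sub_C (1 : K) (by exact_mod_cast hk.ne') one_ne_zero).of_dvd ?_
    exact minpoly.dvd_iff.mpr (by simp [hMk])
  have hle : (minpoly K M).roots ≤ {1} := by
    rw [Multiset.le_iff_subset (nodup_roots hsep)]
    intro ζ hζ
    exact Multiset.mem_singleton.mpr <| hroots ζ <|
      Multiset.mem_of_le (roots.le_of_dvd (charpoly_monic M).ne_zero (minpoly_dvd_charpoly M)) hζ
  have hdvd : minpoly K M ∣ X - C 1 := by
    rw [(IsAlgClosed.splits _).eq_prod_roots_of_monic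
      (minpoly.monic (Algebra.IsIntegral.isIntegral M))]
    simpa using Multiset.prod_dvd_prod_of_le (Multiset.map_le_map (f := fun x => X - C x) hle)
  simpa [sub_eq_zero] using minpoly.dvd_iff.mp hdvd

end IsAlgClosed

variable {M : Matrix n n ℂ}

lemma norm_eq_one_of_mem_roots_charpoly (hM : IsOfFinOrder M) {ζ : ℂ}
    (hζ : ζ ∈ M.charpoly.roots) : ‖ζ‖ = 1 :=
  (spectrum.isOfFinOrder_of_mem hM
    (mem_spectrum_iff_isRoot_charpoly.mpr (isRoot_of_mem_roots hζ))).norm_eq_one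

lemma norm_trace_le_card_of_isOfFinOrder (hM : IsOfFinOrder M) :
    ‖M.trace‖ ≤ Fintype.card n := by
  rw [trace_eq_sum_roots_charpoly, ← card_roots_charpoly (M := M)]
  exact norm_multiset_sum_le_card fun ζ hζ => (norm_eq_one_of_mem_roots_charpoly hM hζ).le

lemma eq_one_of_isOfFinOrder_of_trace_eq_card (hM : IsOfFinOrder M)
    (htrace : M.trace = Fintype.card n) : M = 1 :=
  eq_one_of_isOfFinOrder_of_roots_charpoly hM fun _ hζ =>
    Complex.eq_one_of_multiset_sum_eq_card (fun _ h => (norm_eq_one_of_mem_roots_charpoly hM h).le)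
      (by rw [← trace_eq_sum_roots_charpoly, htrace, card_roots_charpoly]) hζ

end Matrix

namespace MonoidAlgebra

variable {R G : Type*} [CommRing R] [Group G] [Fintype G] [DecidableEq G]

lemma leftMulMatrix_basis_apply (a : MonoidAlgebra R G) (g h : G) :
    Algebra.leftMulMatrix (basis G R) a g h = a.coeff (g * h⁻¹) := by
  rw [Algebra.leftMulMatrix_eq_repr_mul, basis_apply]
  exact (coeff_mul_single_apply ..).trans (mul_one _)

lemma trace_leftMulMatrix_basis (a : MonoidAlgebra R G) :
    (Algebra.leftMulMatrix (basis G R) a).trace = Fintype.card G • a.coeff 1 := by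
  simp [Matrix.trace, leftMulMatrix_basis_apply]

lemma norm_coeff_one_le_one_of_isOfFinOrder {a : MonoidAlgebra ℂ G} (ha : IsOfFinOrder a) :
    ‖a.coeff 1‖ ≤ 1 := by
  have h := Matrix.norm_trace_le_card_of_isOfFinOrder
    (Algebra.isOfFinOrder_leftMulMatrix (basis G ℂ) ha)
  rw [trace_leftMulMatrix_basis, nsmul_eq_mul, norm_mul, Complex.norm_natCast] at h
  exact le_of_mul_le_mul_left (by simpa using h) (by exact_mod_cast Fintype.card_pos)

lemma eq_one_of_isOfFinOrder_of_coeff_one_eq_one {a : MonoidAlgebra ℂ G} (ha : IsOfFinOrder a)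
    (h1 : a.coeff 1 = 1) : a = 1 := by
  refine Algebra.leftMulMatrix_injective (basis G ℂ) ?_
  rw [map_one]
  refine Matrix.eq_one_of_isOfFinOrder_of_trace_eq_card
    (Algebra.isOfFinOrder_leftMulMatrix (basis G ℂ) ha) ?_
  rw [trace_leftMulMatrix_basis, h1, nsmul_one]

end MonoidAlgebra

theorem berman_higman (G : Type*) [Group G] [Fintype G]
    (u : (MonoidAlgebra ℤ G)ˣ) (hu : IsOfFinOrder u)
    (hnorm : aug ℤ G (↑u : MonoidAlgebra ℤ G) = 1) (hne : u ≠ 1) :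
    (↑u : MonoidAlgebra ℤ G).coeff 1 = 0 := by
  classical
  let φ : MonoidAlgebra ℤ G →* MonoidAlgebra ℂ G := mapRingHom G (Int.castRingHom ℂ)
  have hφ : Function.Injective φ := map_injective (Int.castAddHom ℂ) Int.cast_injective
  have eq_one (a : MonoidAlgebra ℤ G) (ha : IsOfFinOrder a) (h1 : a.coeff 1 = 1) : a = 1 :=
    hφ <| by
      rw [map_one]
      exact eq_one_of_isOfFinOrder_of_coeff_one_eq_one (φ.isOfFinOrder ha) (by simp [φ, h1])
  have ha : IsOfFinOrder (u : MonoidAlgebra ℤ G) := Units.isOfFinOrder_val.mpr hu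
  have hbound : |(u : MonoidAlgebra ℤ G).coeff 1| ≤ 1 := by
    have h := norm_coeff_one_le_one_of_isOfFinOrder (φ.isOfFinOrder ha)
    simp only [φ, MonoidHom.coe_coe, coeff_mapRingHom, eq_intCast, Complex.norm_intCast] at h
    exact_mod_cast h
  rcases Int.abs_le_one_iff.mp hbound with h | h | h
  · exact h
  · exact absurd (Units.ext (eq_one _ ha h)) hne
  · have hu' : (u : MonoidAlgebra ℤ G) = -1 :=
      neg_eq_iff_eq_neg.mp (eq_one _ ha.neg (by simp [h]))
    rw [hu', map_neg, map_one] at hnorm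
    norm_num at hnorm
end

section
/- (Zmud–Kurennoi) Let G be a finite group and let H be a finite subgroup of V(ℤG). Then the order of H divides the order of G. -/
/-!
Let `H` act on `ℂG` by left multiplication. The character of this representation at `u`
is `|G| · u₁`, where `u₁` is the coefficient of `u` at `1`. By the Berman–Higman theorem a
normalized unit `u ≠ 1` of finite order has `u₁ = 0`: the eigenvalues of left multiplication by
`u` are roots of unity summing to `|G| · u₁ ∈ |G| ℤ`, so `|u₁| ≤ 1`, and if `|u₁| = 1` they are
all equal to `u₁`, which forces the diagonalizable operator, hence `u`, to be the scalar `u₁`.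
So the character of `H` is `|G|` at `1` and `0` elsewhere, and its average `|G| / |H|` is the
dimension of the space of `H`-invariants.
-/

open MonoidAlgebra

open Polynomial Module ComplexConjugate

namespace Complex

lemma re_lt_one_of_norm_eq_one {w : ℂ} (hw : ‖w‖ = 1) (hw1 : w ≠ 1) : w.re < 1 := by
  refine lt_of_le_of_ne (hw ▸ re_le_norm w) fun hre => hw1 ?_
  have him : w.im = 0 := (nonneg_iff.mp (re_eq_norm.mp (hre.trans hw.symm))).2.symm
  exact Complex.ext hre him

lemma eq_of_norm_eq_one_of_sum_eq_card_smul {s : Multiset ℂ} {c : ℂ}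
    (hs : ∀ z ∈ s, ‖z‖ = 1) (hc : ‖c‖ = 1) (hsum : s.sum = s.card • c) : ∀ z ∈ s, z = c := by
  by_contra! ⟨z, hz, hzc⟩
  have hcc : c * conj c = 1 := by simp [mul_conj, normSq_eq_norm_sq, hc]
  have hle : ∀ w ∈ s, (w * conj c).re ≤ (fun _ => (1 : ℝ)) w := fun w hw => by
    simpa [hs w hw, hc] using re_le_norm (w * conj c)
  have hlt : (z * conj c).re < 1 := by
    refine re_lt_one_of_norm_eq_one (by simp [hs z hz, hc]) fun h => hzc ?_
    have := congrArg (· * c) h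
    rwa [mul_assoc, mul_comm (conj c), hcc, mul_one, one_mul] at this
  have hsum_re : (s.map fun w => (w * conj c).re).sum = s.card :=
    calc _ = reAddGroupHom (s.map (· * conj c)).sum := by
          rw [map_multiset_sum, Multiset.map_map]; rfl
      _ = s.card := by simp [Multiset.sum_map_mul_right, hsum, mul_assoc, hcc]
  have := Multiset.sum_lt_sum hle ⟨z, hz, hlt⟩
  simp only [hsum_re, Multiset.map_const', Multiset.sum_replicate, nsmul_eq_mul, mul_one] at this
  exact lt_irrefl _ this

end Complex

namespace Module.End

variable {V : Type*} [AddCommGroup V] [Module ℂ V] [FiniteDimensional ℂ V] {f : End ℂ V} {k : ℕ}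

lemma pow_eq_one_of_mem_roots_charpoly (hf : f ^ k = 1) {z : ℂ} (hz : z ∈ f.charpoly.roots) :
    z ^ k = 1 := by
  obtain ⟨v, hv⟩ := (((hasEigenvalue_iff_isRoot_charpoly f z).mpr
    (isRoot_of_mem_roots hz)).pow k).exists_hasEigenvector
  have hv' : z ^ k • v = (1 : ℂ) • v := by simpa [hf] using hv.apply_eq_smul.symm
  exact smul_left_injective ℂ hv.2 hv'

lemma norm_eq_one_of_mem_roots_charpoly (hk : k ≠ 0) (hf : f ^ k = 1) {z : ℂ}
    (hz : z ∈ f.charpoly.roots) : ‖z‖ = 1 :=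
  Complex.norm_eq_one_of_pow_eq_one (pow_eq_one_of_mem_roots_charpoly hf hz) hk

lemma card_roots_charpoly (f : End ℂ V) : f.charpoly.roots.card = finrank ℂ V := by
  rw [splits_iff_card_roots.mp (IsAlgClosed.splits _), LinearMap.charpoly_natDegree]

lemma norm_trace_le_finrank_of_pow_eq_one (hk : k ≠ 0) (hf : f ^ k = 1) :
    ‖LinearMap.trace ℂ V f‖ ≤ finrank ℂ V := by
  rw [trace_eq_sum_roots_charpoly_of_splits (IsAlgClosed.splits _)]
  calc _ ≤ (f.charpoly.roots.map (‖·‖)).sum := norm_multiset_sum_le _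
    _ = finrank ℂ V := by
      simp [Multiset.map_congr rfl fun z => norm_eq_one_of_mem_roots_charpoly hk hf,
        card_roots_charpoly]

lemma eq_algebraMap_of_pow_eq_one_of_trace_eq (hk : k ≠ 0) (hf : f ^ k = 1) {c : ℂ}
    (hc : ‖c‖ = 1) (htr : LinearMap.trace ℂ V f = finrank ℂ V • c) :
    f = algebraMap ℂ (End ℂ V) c := by
  obtain hV | hV := subsingleton_or_nontrivial V
  · exact Subsingleton.elim _ _
  have hroots : f.charpoly.roots = .replicate (finrank ℂ V) c := by
    refine Multiset.eq_replicate.mpr ⟨card_roots_charpoly f, ?_⟩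
    refine Complex.eq_of_norm_eq_one_of_sum_eq_card_smul
      (fun z => norm_eq_one_of_mem_roots_charpoly hk hf) hc ?_
    rw [← trace_eq_sum_roots_charpoly_of_splits (IsAlgClosed.splits _), htr, card_roots_charpoly]
  have hcharpoly : f.charpoly = (X - C c) ^ finrank ℂ V := by
    rw [(IsAlgClosed.splits _).eq_prod_roots_of_monic f.charpoly_monic, hroots,
      Multiset.map_replicate, Multiset.prod_replicate]
  -- `f` is semisimple: its minimal polynomial divides the separable `X ^ k - 1`.
  have hsq : Squarefree (minpoly ℂ f) :=
    ((separable_X_pow_sub_C 1 (by exact_mod_cast hk) one_ne_zero).squarefree).squarefree_of_dvd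
      (minpoly.dvd ℂ f (by simp [hf]))
  have hdvd : minpoly ℂ f ∣ X - C c :=
    (hsq.dvd_pow_iff_dvd finrank_pos.ne').mp (hcharpoly ▸ LinearMap.minpoly_dvd_charpoly f)
  simpa [sub_eq_zero] using aeval_eq_zero_of_dvd_aeval_eq_zero hdvd (minpoly.aeval ℂ f)

end Module.End

namespace MonoidAlgebra

lemma finrank_eq_card {R G : Type*} [Ring R] [StrongRankCondition R] [Fintype G] :
    finrank R (MonoidAlgebra R G) = Nat.card G := by
  rw [finrank_eq_card_basis (basis G R), Nat.card_eq_fintype_card]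

lemma trace_lmul {R G : Type*} [CommRing R] [Group G] [Fintype G] (a : MonoidAlgebra R G) :
    LinearMap.trace R _ (Algebra.lmul R (MonoidAlgebra R G) a) = Nat.card G • a.coeff 1 := by
  classical
  have hrepr (x : MonoidAlgebra R G) (g : G) : (basis G R).repr x g = x.coeff g := rfl
  rw [LinearMap.trace_eq_matrix_trace R (basis G R)]
  simp [Matrix.trace, LinearMap.toMatrix_apply, hrepr, Nat.card_eq_fintype_card]

noncomputable def unitsRegularRep (G : Type*) [Group G] :
    Representation ℂ (MonoidAlgebra ℤ G)ˣ (MonoidAlgebra ℂ G) :=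
  (Algebra.lmul ℂ (MonoidAlgebra ℂ G)).toMonoidHom.comp
    ((mapRingHom G (Int.castRingHom ℂ)).toMonoidHom.comp (Units.coeHom _))

variable {G : Type*} [Group G]

lemma unitsRegularRep_apply (u : (MonoidAlgebra ℤ G)ˣ) :
    unitsRegularRep G u = Algebra.lmul ℂ _ (mapRingHom G (Int.castRingHom ℂ) u) := rfl

variable [Fintype G]

lemma character_unitsRegularRep (u : (MonoidAlgebra ℤ G)ˣ) :
    (unitsRegularRep G).character u = Nat.card G * ((u : MonoidAlgebra ℤ G).coeff 1 : ℂ) := by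
  rw [Representation.character, unitsRegularRep_apply, trace_lmul]
  simp

variable {u : (MonoidAlgebra ℤ G)ˣ} {k : ℕ}

lemma abs_coeff_one_le_one_of_pow_eq_one (hk : k ≠ 0) (hu : u ^ k = 1) :
    |(u : MonoidAlgebra ℤ G).coeff 1| ≤ 1 := by
  have hf : unitsRegularRep G u ^ k = 1 := by rw [← map_pow, hu, map_one]
  have h := Module.End.norm_trace_le_finrank_of_pow_eq_one hk hf
  rw [← Representation.character, character_unitsRegularRep, finrank_eq_card, norm_mul,
    Complex.norm_natCast, Complex.norm_intCast] at h
  have hG : (0 : ℝ) < Nat.card G := by exact_mod_cast Nat.card_pos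
  have h' : |((u : MonoidAlgebra ℤ G).coeff 1 : ℝ)| ≤ 1 :=
    le_of_mul_le_mul_left (by rwa [mul_one]) hG
  exact_mod_cast h'

lemma eq_intCast_coeff_one_of_pow_eq_one (hk : k ≠ 0) (hu : u ^ k = 1)
    (habs : |(u : MonoidAlgebra ℤ G).coeff 1| = 1) :
    (u : MonoidAlgebra ℤ G) = ((u : MonoidAlgebra ℤ G).coeff 1 : MonoidAlgebra ℤ G) := by
  have hf : unitsRegularRep G u ^ k = 1 := by rw [← map_pow, hu, map_one]
  have hscalar := Module.End.eq_algebraMap_of_pow_eq_one_of_trace_eq hk hf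
    (c := ((u : MonoidAlgebra ℤ G).coeff 1 : ℂ))
    (by rw [Complex.norm_intCast, ← Int.cast_abs, habs, Int.cast_one])
    (by rw [← Representation.character, character_unitsRegularRep, finrank_eq_card,
      nsmul_eq_mul])
  apply map_injective (Int.castRingHom ℂ : ℤ →+ ℂ) Int.cast_injective
  rw [← coe_mapRingHom, map_intCast]
  simpa [unitsRegularRep_apply] using congr($hscalar 1)

theorem coeff_one_eq_zero_of_pow_eq_one (hk : k ≠ 0) (hu : u ^ k = 1)
    (haug : aug ℤ G u = 1) (hu1 : u ≠ 1) : (u : MonoidAlgebra ℤ G).coeff 1 = 0 := by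
  by_contra ht
  have habs : |(u : MonoidAlgebra ℤ G).coeff 1| = 1 := by
    have := abs_coeff_one_le_one_of_pow_eq_one hk hu
    have := abs_pos.mpr ht
    omega
  have hu_eq := eq_intCast_coeff_one_of_pow_eq_one hk hu habs
  have ht1 : (u : MonoidAlgebra ℤ G).coeff 1 = 1 := by rwa [hu_eq, map_intCast] at haug
  exact hu1 (Units.ext (by rw [hu_eq, ht1]; simp))

theorem sum_coeff_one_eq_one (H : Subgroup (MonoidAlgebra ℤ G)ˣ) [Fintype H]
    (hH : ∀ h ∈ H, aug ℤ G (h : MonoidAlgebra ℤ G) = 1) :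
    ∑ h : H, ((h : (MonoidAlgebra ℤ G)ˣ) : MonoidAlgebra ℤ G).coeff 1 = 1 := by
  rw [Finset.sum_eq_single_of_mem 1 (Finset.mem_univ _) fun h _ hne => ?_]
  · simp
  refine coeff_one_eq_zero_of_pow_eq_one (k := Nat.card H) Nat.card_pos.ne' ?_ (hH h h.2) ?_
  · exact_mod_cast pow_card_eq_one' (x := h)
  · exact_mod_cast hne

end MonoidAlgebra

theorem zmud_kurennoi (G : Type*) [Group G] [Fintype G]
    (H : Subgroup (MonoidAlgebra ℤ G)ˣ) [Finite H]
    (hH : ∀ h ∈ H, aug ℤ G (h : MonoidAlgebra ℤ G) = 1) :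
    Nat.card H ∣ Nat.card G := by
  have : Fintype H := Fintype.ofFinite H
  have : Invertible (Nat.card H : ℂ) := invertibleOfNonzero (by simp)
  set ρ := (unitsRegularRep G).comp H.subtype
  have hχ (h : H) : Representation.character ρ h =
      Nat.card G * (((h : (MonoidAlgebra ℤ G)ˣ) : MonoidAlgebra ℤ G).coeff 1 : ℂ) :=
    character_unitsRegularRep _
  have key := Representation.card_inv_mul_sum_char_eq_finrank ρ
  rw [Fintype.sum_congr _ _ hχ, ← Finset.mul_sum, ← Int.cast_sum, sum_coeff_one_eq_one H hH,
    Int.cast_one, mul_one] at key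
  refine Dvd.intro (finrank ℂ (Representation.invariants ρ)) (Nat.cast_injective (R := ℂ) ?_)
  rw [Nat.cast_mul, ← key]
  field_simp
end

section
/- (Coleman Lemma) Let p be a prime, let R be a commutative ring in which p is not invertible, let G be a finite group, and let H be a p-subgroup of G. Then the normalizer of the image of H in the unit group of RG is generated by the image of N_G(H) and the centralizer of the image of H in the unit group of RG; that is, every unit u of RG with u⁻¹(image of H)u = image of H can be written as u = n·c where n is the image in RG of an element of N_G(H) and c is a unit of RG commuting with the image of every element of H. -/
open MonoidAlgebra

open MonoidAlgebra

/-!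
Conjugation by `u` maps `H` to itself, so it is given on `H` by a homomorphism `φ : H →* H` with
`h * u = u * φ h` in `RG`. Comparing coefficients, `u` is constant on the orbits of the twisted
action `h • g = h * g * (φ h)⁻¹` of the `p`-group `H` on `G`. Orbits that are not fixed points have
`p`-power size, so if there were no fixed point the augmentation of `u`, the sum of its
coefficients, would lie in `p R`; but it is a unit and `p` is not. A fixed point `g₀` satisfies
`φ h = g₀⁻¹ * h * g₀`, so `g₀` normalizes `H` and `g₀⁻¹ * u` centralizes `H`.
-/

namespace IsPGroup

variable {p : ℕ} [Fact p.Prime] {P : Type*} [Group P] {α : Type*} [Fintype α] [MulAction P α]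
  {R : Type*} [CommRing R] {f : α → R}

open scoped Classical in
theorem sum_orbit_mem_span (hP : IsPGroup p P) (hf : ∀ (σ : P) (x : α), f (σ • x) = f x)
    {a : α} (ha : a ∉ MulAction.fixedPoints P α) :
    ∑ x : MulAction.orbit P a, f x ∈ Ideal.span {(p : R)} := by
  have hconst : ∑ x : MulAction.orbit P a, f x = Nat.card (MulAction.orbit P a) • f a := by
    rw [Nat.card_eq_fintype_card, ← Finset.card_univ, ← Finset.sum_const]
    refine Finset.sum_congr rfl ?_
    rintro ⟨_, σ, rfl⟩ -
    exact hf σ a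
  obtain ⟨k, hk⟩ := hP.card_orbit a
  have hk0 : k ≠ 0 := by
    rintro rfl
    refine ha (MulAction.mem_fixedPoints_iff_card_orbit_eq_one.mpr ?_)
    rw [← Nat.card_eq_fintype_card, hk, pow_zero]
  rw [hconst, hk, nsmul_eq_mul]
  refine Ideal.mul_mem_right _ _ (Ideal.mem_span_singleton.mpr ?_)
  push_cast
  exact dvd_pow_self _ hk0

theorem exists_mem_fixedPoints_of_isUnit_sum (hP : IsPGroup p P) (hp : ¬IsUnit (p : R))
    (hf : ∀ (σ : P) (x : α), f (σ • x) = f x) (hunit : IsUnit (∑ x, f x)) :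
    ∃ a, a ∈ MulAction.fixedPoints P α := by
  classical
  by_contra! hnone
  have hmem : ∑ x, f x ∈ Ideal.span {(p : R)} := by
    rw [← (MulAction.selfEquivSigmaOrbits P α).symm.sum_comp, Fintype.sum_sigma]
    exact Ideal.sum_mem _ fun ω _ => hP.sum_orbit_mem_span hf (hnone _)
  exact hp (Ideal.span_singleton_eq_top.mp (Ideal.eq_top_of_isUnit_mem _ hmem hunit))

end IsPGroup

section GroupRing

variable {R : Type*} [CommRing R] {G : Type*} [Group G]

theorem aug_eq_sum_coeff [Fintype G] (a : MonoidAlgebra R G) : aug R G a = ∑ g, a.coeff g := by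
  have haug_single (g : G) (r : R) : aug R G (single g r) = r := by
    simp [aug, liftNCRingHom, liftNC_single]
  conv_lhs => rw [← sum_coeff_single a]
  rw [Finsupp.sum, map_sum]
  simp only [haug_single]
  exact Finset.sum_subset (Finset.subset_univ _) fun x _ hx => Finsupp.notMem_support_iff.mp hx

theorem coeff_mul_mul_inv_eq_of_of_mul_eq {a : MonoidAlgebra R G} {g g' : G}
    (h : of R G g * a = a * of R G g') (x : G) : a.coeff (g * x * g'⁻¹) = a.coeff x := by
  have := congrArg (fun b : MonoidAlgebra R G => b.coeff (g * x)) h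
  simpa only [of_apply, coeff_single_mul_apply, coeff_mul_single_apply, one_mul, mul_one,
    inv_mul_cancel_left] using this.symm

end GroupRing

abbrev twistedMulAction {K G : Type*} [Group K] [Group G] (ψ φ : K →* G) : MulAction K G where
  smul k g := ψ k * g * (φ k)⁻¹
  one_smul g := show ψ 1 * g * (φ 1)⁻¹ = g by simp
  mul_smul k l g := show ψ (k * l) * g * (φ (k * l))⁻¹ = ψ k * (ψ l * g * (φ l)⁻¹) * (φ k)⁻¹ by
    simp [mul_assoc]

theorem exists_monoidHom_mul_eq_mul_of_conj_mem {M G : Type*} [Monoid M] [Group G]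
    {ι : G →* M} (hι : Function.Injective ι) (u : Mˣ) (H : Subgroup G)
    (hu : ∀ h ∈ H, ↑u⁻¹ * ι h * ↑u ∈ ι '' H) :
    ∃ φ : H →* H, ∀ h : H, ι h * u = u * ι (φ h) := by
  choose φ hφH hφ using fun h : H => hu h h.2
  refine ⟨{ toFun h := ⟨φ h, hφH h⟩, map_one' := ?_, map_mul' a b := ?_ }, fun h => ?_⟩
  · exact Subtype.ext (hι (by simp [hφ]))
  · refine Subtype.ext (hι ?_)
    simp [hφ, mul_assoc]
  · simp [hφ, mul_assoc]

theorem commute_map_inv_mul_of_mem_normalizer {M G : Type*} [Monoid M] [Group G]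
    (ι : G →* M) {H : Subgroup G} {u : M} {g : G} (hg : g ∈ Subgroup.normalizer (H : Set G))
    (hconj : ∀ h ∈ H, ι h * u = u * ι (g⁻¹ * h * g)) {h : G} (hh : h ∈ H) :
    Commute (ι g⁻¹ * u) (ι h) := by
  have hconj' : ι (g * h * g⁻¹) * u = u * ι h := by
    simpa [mul_assoc] using hconj _ ((Subgroup.mem_normalizer_iff.mp hg h).mp hh)
  calc ι g⁻¹ * u * ι h = ι g⁻¹ * (ι (g * h * g⁻¹) * u) := by rw [mul_assoc, hconj']
    _ = ι h * (ι g⁻¹ * u) := by simp only [← mul_assoc, ← map_mul]; group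

theorem coleman_lemma (p : ℕ) [Fact p.Prime] (R : Type*) [CommRing R]
    (hp : ¬ IsUnit (p : R)) (G : Type*) [Group G] [Fintype G]
    (H : Subgroup G) (hH : IsPGroup p H)
    (u : (MonoidAlgebra R G)ˣ)
    (hu : (fun x => (↑u⁻¹ : MonoidAlgebra R G) * x * ↑u) ''
          (MonoidAlgebra.of R G '' (H : Set G)) = MonoidAlgebra.of R G '' (H : Set G)) :
    ∃ n ∈ Subgroup.normalizer (H : Set G), ∃ c : (MonoidAlgebra R G)ˣ,
      (∀ h ∈ H, Commute (↑c : MonoidAlgebra R G) (MonoidAlgebra.of R G h)) ∧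
      (↑u : MonoidAlgebra R G) = MonoidAlgebra.of R G n * ↑c := by
  have : Nontrivial R :=
    (subsingleton_or_nontrivial R).resolve_left fun _ => hp (isUnit_of_subsingleton _)
  obtain ⟨φ, hφ⟩ := exists_monoidHom_mul_eq_mul_of_conj_mem of_injective u H
    fun h hh => hu ▸ ⟨_, ⟨h, hh, rfl⟩, rfl⟩
  let _ := twistedMulAction H.subtype (H.subtype.comp φ)
  obtain ⟨g₀, hg₀⟩ := hH.exists_mem_fixedPoints_of_isUnit_sum hp
    (f := fun g => (u : MonoidAlgebra R G).coeff g)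
    (fun h g => coeff_mul_mul_inv_eq_of_of_mul_eq (hφ h) g)
    (by simpa only [aug_eq_sum_coeff] using u.isUnit.map (aug R G))
  have hφ_eq (h : H) : (φ h : G) = g₀⁻¹ * h * g₀ := by
    have : (h : G) * g₀ * (φ h : G)⁻¹ = g₀ := hg₀ h
    nth_rewrite 1 [← this]
    group
  have hg₀N : g₀ ∈ Subgroup.normalizer (H : Set G) := by
    refine inv_mem_iff.mp (Subgroup.mem_normalizer_fintype fun h hh => ?_)
    simpa [hφ_eq ⟨h, hh⟩] using (φ ⟨h, hh⟩).2
  refine ⟨g₀, hg₀N, Units.map (of R G) (toUnits g₀⁻¹) * u, fun h hh => ?_, ?_⟩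
  · exact commute_map_inv_mul_of_mem_normalizer (of R G) hg₀N
      (fun h hh => hφ_eq ⟨h, hh⟩ ▸ hφ ⟨h, hh⟩) hh
  · simp [← mul_assoc, ← one_def]
end
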